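/- Let (a_i) be defined by a_1 = 1 and a_{i+1} = 2^{a_i}. Let x = [0; a_1, a_2, …] and q_j the denominators of its convergents. Then lim_{j→∞} (log q_{j+1})/q_j = 0. -/
import Mathlib


open Filter Topology Finset

/-- The sequence `a_1 = 1`, `a_{i+1} = 2^{a_i}` (index `0` unused, set to `1`). -/
def a11 : ℕ → ℕ
  | 0 => 1
  | 1 => 1
  | (n+2) => 2 ^ (a11 (n+1))

/-- Convergent denominators of `[0; a_1, a_2, …]`. -/
def qd (a : ℕ → ℕ) : ℕ → ℕ
  | 0 => 1
  | 1 => a 1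
  | (n+2) => a (n+2) * qd a (n+1) + qd a n

lemma a11_pos : ∀ n, 1 ≤ a11 n
  | 0 => le_refl 1
  | 1 => le_refl 1
  | (n+2) => Nat.one_le_two_pow

lemma qd_pos : ∀ n, 1 ≤ qd a11 n
  | 0 => le_refl 1
  | 1 => le_refl 1
  | (n+2) => le_trans (qd_pos n) (Nat.le_add_left _ _)

lemma qd_mono_succ : ∀ n, qd a11 n ≤ qd a11 (n+1)
  | 0 => le_refl 1
  | (n+1) => by
      show qd a11 (n+1) ≤ a11 (n+2) * qd a11 (n+1) + qd a11 n
      calc qd a11 (n+1) = 1 * qd a11 (n+1) := (one_mul _).symm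
        _ ≤ a11 (n+2) * qd a11 (n+1) := Nat.mul_le_mul_right _ (a11_pos _)
        _ ≤ _ := Nat.le_add_right _ _

lemma qd_mono : Monotone (qd a11) := monotone_nat_of_le_succ qd_mono_succ

lemma le_two_mul_qd : ∀ n, n ≤ 2 * qd a11 n
  | 0 => Nat.zero_le _
  | 1 => by norm_num [qd, a11]
  | (n+2) => by
      have h1 := le_two_mul_qd n
      have h2 : qd a11 n + 1 ≤ qd a11 (n+2) := by
        show qd a11 n + 1 ≤ a11 (n+2) * qd a11 (n+1) + qd a11 n
        have : 1 ≤ a11 (n+2) * qd a11 (n+1) :=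
          Nat.one_le_iff_ne_zero.mpr (Nat.mul_ne_zero
            (Nat.one_le_iff_ne_zero.mp (a11_pos _)) (Nat.one_le_iff_ne_zero.mp (qd_pos _)))
        omega
      omega

lemma two_mul_le_two_pow : ∀ n, 1 ≤ n → 2 * n ≤ 2 ^ n := by
  intro n hn
  induction n with
  | zero => omega
  | succ m ih =>
      rcases Nat.eq_or_lt_of_le hn with h | h
      · simp [← h]
      · have hm : 1 ≤ m := by omega
        have h2 : 2 ^ m ≥ 2 * m := ih hm
        rw [pow_succ]
        omega

lemma qd_upper : ∀ n, 1 ≤ n → qd a11 (n+1) + 1 ≤ 4 ^ (a11 n) := by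
  intro n hn
  induction n with
  | zero => omega
  | succ m ih =>
      rcases Nat.eq_or_lt_of_le hn with h | h
      · rw [← h]; decide
      · have hm : 1 ≤ m := by omega
        have ihm := ih hm
        set X := 2 ^ (a11 (m+1)) with hXdef
        have hA : a11 (m+2) = X := rfl
        have hA1 : a11 (m+1) = 2 ^ (a11 m) := by
          cases m with
          | zero => omega
          | succ k => rfl
        have h4 : 4 ^ (a11 m) ≤ X := by
          have h2m : 2 * a11 m ≤ 2 ^ (a11 m) := two_mul_le_two_pow _ (a11_pos _)
          have h44 : (4:ℕ) ^ (a11 m) = 2 ^ (2 * a11 m) := by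
            rw [pow_mul]; norm_num
          rw [h44, hXdef]
          exact Nat.pow_le_pow_right (by norm_num) (by omega)
        set y := qd a11 (m+1) with hydef
        have hy : y + 1 ≤ X := le_trans ihm h4
        have hqm : qd a11 m ≤ y := qd_mono_succ m
        have hXX : (4:ℕ) ^ (a11 (m+1)) = X * X := by
          rw [show (4:ℕ) = 2 * 2 from rfl, mul_pow, hXdef]
        have hq3 : qd a11 (m+2) = a11 (m+2) * y + qd a11 m := rfl
        rw [show m + 1 + 1 = m + 2 from rfl, hq3, hXX, hA]
        have h1 : X * (y+1) ≤ X * X := Nat.mul_le_mul_left X hy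
        have h2 : X * (y+1) = X * y + X := by ring
        omega

lemma qd_atTop : Tendsto (qd a11) atTop atTop := by
  apply tendsto_atTop_atTop_of_monotone qd_mono
  intro b
  exact ⟨2 * b, by have := le_two_mul_qd (2*b); omega⟩

lemma qd_lower : ∀ n, a11 (n+2) * qd a11 (n+1) ≤ qd a11 (n+2) := by
  intro n
  show a11 (n+2) * qd a11 (n+1) ≤ a11 (n+2) * qd a11 (n+1) + qd a11 n
  exact Nat.le_add_right _ _

/-- For `a_1 = 1`, `a_{i+1} = 2^{a_i}`, we have `log q_{j+1}/q_j → 0`. -/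
theorem stmt11 :
    Tendsto (fun j : ℕ => Real.log (qd a11 (j+1)) / (qd a11 j : ℝ)) atTop (nhds 0) := by
  have hg : Tendsto (fun j : ℕ => 2 * Real.log 2 / (qd a11 (j-1) : ℝ)) atTop (nhds 0) := by
    apply Tendsto.div_atTop tendsto_const_nhds
    exact tendsto_natCast_atTop_atTop.comp (qd_atTop.comp (tendsto_sub_atTop_nat 1))
  apply squeeze_zero' ?_ ?_ hg
  · filter_upwards with j
    apply div_nonneg
    · apply Real.log_nonneg
      exact_mod_cast qd_pos (j+1)
    · positivity
  · filter_upwards [eventually_ge_atTop 2] with j hj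
    obtain ⟨n, rfl⟩ : ∃ n, j = n + 2 := ⟨j - 2, by omega⟩
    have hsub : n + 2 - 1 = n + 1 := by omega
    rw [hsub]
    set A : ℕ := a11 (n+2) with hAdef
    have hApos : (0:ℝ) < A := by exact_mod_cast a11_pos (n+2)
    have hq1pos : (0:ℝ) < qd a11 (n+1) := by exact_mod_cast qd_pos (n+1)
    have hq2pos : (0:ℝ) < qd a11 (n+2) := by exact_mod_cast qd_pos (n+2)
    have hlog : Real.log (qd a11 (n+3)) ≤ A * (2 * Real.log 2) := by
      have h1 : (qd a11 (n+3) : ℝ) ≤ (4:ℝ) ^ A := by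
        have h0 := qd_upper (n+2) (by omega)
        rw [show n + 2 + 1 = n + 3 from rfl] at h0
        have h0' : qd a11 (n+3) ≤ 4 ^ A := by rw [hAdef]; omega
        exact_mod_cast h0'
      calc Real.log (qd a11 (n+3)) ≤ Real.log ((4:ℝ) ^ A) := by
            apply Real.log_le_log (by exact_mod_cast qd_pos (n+3)) h1
        _ = A * Real.log 4 := by rw [Real.log_pow]
        _ = A * (2 * Real.log 2) := by
            rw [show (4:ℝ) = 2 ^ 2 by norm_num, Real.log_pow]
            push_cast; ring
    have hden : A * (qd a11 (n+1) : ℝ) ≤ (qd a11 (n+2) : ℝ) := by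
      exact_mod_cast qd_lower n
    have hlog2 : (0:ℝ) ≤ 2 * Real.log 2 := by positivity
    calc Real.log (qd a11 (n+2+1)) / (qd a11 (n+2) : ℝ)
        ≤ (A * (2 * Real.log 2)) / (qd a11 (n+2) : ℝ) := by
          gcongr
      _ ≤ (A * (2 * Real.log 2)) / (A * (qd a11 (n+1) : ℝ)) := by
          gcongr <;> first
            | exact mul_nonneg hApos.le hlog2
            | positivity
            | exact hden
      _ = 2 * Real.log 2 / (qd a11 (n+1) : ℝ) := by
          rw [mul_div_mul_left _ _ (ne_of_gt hApos)]
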